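/- arXiv:2507.13829 — 3 statements merged into one kernel-verified Lean document; each statement's English description precedes it below -/
import Mathlib

section
/- Let k ∈ ℕ and let h_k be the k-th Hermite function, i.e. the L²(ℝ)-normalized function proportional, with positive leading behavior, to H_k(t)e^{−πt²}, where H_k is the degree-k orthogonal polynomial with respect to the weight t ↦ e^{−2πt²} on ℝ. Then for every z ∈ ℂ, Spec(h_k)(z) = e^{−π|z|²} · π^k |z|^{2k} / k!. -/
open Real MeasureTheory

/-- The Gaussian-window spectrogram:
`Spec y (τ+iω) = |∫ y(t) 2^{1/4} e^{−π(t−τ)²} e^{−2iπωt} dt|²`. -/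
noncomputable def Spec (y : ℝ → ℂ) (z : ℂ) : ℝ :=
  ‖(∫ t : ℝ, y t * (((2 : ℝ) ^ ((1 : ℝ) / 4) : ℝ) : ℂ)
    * Complex.exp (-(π : ℂ) * ((t : ℂ) - (z.re : ℂ)) ^ 2)
    * Complex.exp (-2 * (π : ℂ) * Complex.I * (z.im : ℂ) * (t : ℂ)))‖ ^ 2

/-!
The spectrogram of `P(t) e^{-πt²}` at `z` is, up to the factor `2^{1/4} e^{-π|z|²/2}`, the
Gaussian pairing `∫ P(t) e^{-2π(t-c)²} dt` with `c = z̄/2`. Integration by parts against the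
Gaussian shows that this pairing is translation invariant on polynomials even for complex `c`,
i.e. it equals `∫ P(t+c) e^{-2πt²} dt`, and that `∫ S⁽ⁱ⁾ e^{-2πt²} = ∫ S Hᵢ e^{-2πt²}` with
`Hᵢ` the Hermite polynomials of Rodrigues' formula, of degree `i`. In the Taylor expansion
`P(t+c) = ∑ cⁱ P⁽ⁱ⁾(t)/i!` orthogonality therefore kills every term except `i = k`, leaving
`a cᵏ/√2` for the leading coefficient `a` of `P`; the same two facts and `‖h‖₂ = 1` give
`a² k! = √2 (4π)ᵏ`.
-/

open Polynomial Complex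

lemma Polynomial.taylor_eq_sum_hasseDeriv {R : Type*} [CommSemiring R] (r : R) (f : R[X])
    {n : ℕ} (hn : f.natDegree < n) :
    taylor r f = ∑ i ∈ Finset.range n, r ^ i • hasseDeriv i f := by
  ext m
  have hm : (hasseDeriv m f).natDegree < n := (natDegree_hasseDeriv_le f m).trans_lt (by omega)
  rw [taylor_coeff, eval_eq_sum_range' hm, finsetSum_coeff]
  refine Finset.sum_congr rfl fun i _ => ?_
  rw [coeff_smul, hasseDeriv_coeff, hasseDeriv_coeff, smul_eq_mul, add_comm i m,
    Nat.choose_symm_add]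
  ring

noncomputable section

def gaussKernel (c : ℂ) (t : ℝ) : ℂ := cexp (-2 * π * ((t : ℂ) - c) ^ 2)

lemma norm_gaussKernel_le (c : ℂ) (t : ℝ) :
    ‖gaussKernel c t‖ ≤ Real.exp (2 * π * ‖c‖ ^ 2) * Real.exp (-π * t ^ 2) := by
  rw [gaussKernel, Complex.norm_exp, ← Real.exp_add, Real.exp_le_exp, Complex.sq_norm,
    Complex.normSq_apply]
  simp only [mul_re, mul_im, sub_re, sub_im, ofReal_re, ofReal_im, neg_re, neg_im, pow_two,
    re_ofNat, im_ofNat]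
  nlinarith [Real.pi_pos, sq_nonneg (t - 2 * c.re)]

lemma integrable_pow_mul_gaussKernel (c : ℂ) (n : ℕ) :
    Integrable (fun t : ℝ => (t : ℂ) ^ n * gaussKernel c t) := by
  have hmoment : Integrable (fun t : ℝ => t ^ n * Real.exp (-π * t ^ 2)) := by
    simpa [Real.rpow_natCast] using integrable_rpow_mul_exp_neg_mul_sq Real.pi_pos (s := n)
      (by linarith [n.cast_nonneg (α := ℝ)])
  refine (hmoment.norm.const_mul (Real.exp (2 * π * ‖c‖ ^ 2))).mono'
    (by fun_prop [gaussKernel]) (ae_of_all _ fun t => ?_)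
  simp only [norm_mul, norm_pow, norm_real, Real.norm_of_nonneg (Real.exp_pos _).le]
  rw [mul_left_comm]
  exact mul_le_mul_of_nonneg_left (norm_gaussKernel_le c t) (by positivity)

lemma integrable_eval_mul_gaussKernel (S : ℂ[X]) (c : ℂ) :
    Integrable (fun t : ℝ => S.eval (t : ℂ) * gaussKernel c t) := by
  simp_rw [eval_eq_sum_range, Finset.sum_mul, mul_assoc]
  exact integrable_finsetSum _ fun i _ => (integrable_pow_mul_gaussKernel c i).const_mul _

lemma hasDerivAt_eval_mul_gaussKernel (S : ℂ[X]) (c : ℂ) (t : ℝ) :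
    HasDerivAt (fun u : ℝ => S.eval (u : ℂ) * gaussKernel c u)
      ((derivative S - C (4 * π : ℂ) * (X - C c) * S).eval (t : ℂ) * gaussKernel c t) t := by
  have hexp : HasDerivAt (fun w : ℂ => -2 * π * (w - c) ^ 2) (-4 * π * ((t : ℂ) - c)) t :=
    ((((hasDerivAt_id' (t : ℂ)).sub_const c).fun_pow 2).const_mul _).congr_deriv (by ring)
  refine (((S.hasDerivAt (t : ℂ)).comp_ofReal).mul hexp.cexp.comp_ofReal).congr_deriv ?_
  simp only [gaussKernel, eval_sub, eval_mul, eval_C, eval_X]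
  ring

def gaussPairing (c : ℂ) : ℂ[X] →ₗ[ℂ] ℂ where
  toFun S := ∫ t : ℝ, S.eval (t : ℂ) * gaussKernel c t
  map_add' S T := by
    simp only [eval_add, add_mul]
    exact integral_add (integrable_eval_mul_gaussKernel S c) (integrable_eval_mul_gaussKernel T c)
  map_smul' a S := by
    simp only [eval_smul, smul_eq_mul, mul_assoc, RingHom.id_apply]
    exact integral_const_mul a _

lemma gaussPairing_apply (c : ℂ) (S : ℂ[X]) :
    gaussPairing c S = ∫ t : ℝ, S.eval (t : ℂ) * gaussKernel c t := rfl

lemma gaussPairing_C_mul (c a : ℂ) (S : ℂ[X]) :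
    gaussPairing c (C a * S) = a * gaussPairing c S := by
  rw [← smul_eq_C_mul, map_smul, smul_eq_mul]

lemma gaussPairing_derivative (c : ℂ) (S : ℂ[X]) :
    gaussPairing c (derivative S) = 4 * π * gaussPairing c ((X - C c) * S) := by
  have h : gaussPairing c (derivative S - C (4 * π : ℂ) * (X - C c) * S) = 0 :=
    integral_eq_zero_of_hasDerivAt_of_integrable (hasDerivAt_eval_mul_gaussKernel S c)
      (integrable_eval_mul_gaussKernel _ c) (integrable_eval_mul_gaussKernel S c)
  rwa [map_sub, mul_assoc, gaussPairing_C_mul, sub_eq_zero] at h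

lemma gaussPairing_one (c : ℂ) : gaussPairing c 1 = ((√2)⁻¹ : ℝ) := by
  have hquad : ∀ t : ℝ, eval (t : ℂ) 1 * gaussKernel c t
      = cexp (-2 * π * (t : ℂ) ^ 2 + 4 * π * c * t + -2 * π * c ^ 2) := fun t => by
    rw [eval_one, one_mul, gaussKernel]; ring_nf
  have hpi : (π : ℂ) ≠ 0 := ofReal_ne_zero.2 Real.pi_ne_zero
  rw [gaussPairing_apply, funext hquad, integral_cexp_quadratic (by simp [Real.pi_pos])]
  have h1 : -2 * π * c ^ 2 - (4 * π * c) ^ 2 / (4 * (-2 * π)) = (0 : ℂ) := by field_simp; ring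
  have h2 : (π : ℂ) / -(-2 * π) = ((1 / 2 : ℝ) : ℂ) := by push_cast; field_simp
  rw [h1, h2, Complex.exp_zero, mul_one,
    show (1 / 2 : ℂ) = ((1 / 2 : ℝ) : ℂ) by push_cast; rfl, ← ofReal_cpow (by norm_num),
    ← Real.sqrt_eq_rpow, one_div, Real.sqrt_inv]

lemma gaussPairing_X_sub_C_pow_succ (c : ℂ) (j : ℕ) :
    4 * π * gaussPairing c ((X - C c) ^ (j + 1)) = j * gaussPairing c ((X - C c) ^ (j - 1)) := by
  rw [pow_succ', ← gaussPairing_derivative, derivative_X_sub_C_pow, gaussPairing_C_mul]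

-- No substitution `t ↦ t + c` is available for complex `c`; instead both sides obey the
-- recursion `gaussPairing_X_sub_C_pow_succ` from the same initial value `1/√2`.
lemma gaussPairing_X_sub_C_pow (c : ℂ) (j : ℕ) :
    gaussPairing c ((X - C c) ^ j) = gaussPairing 0 (X ^ j) := by
  induction j using Nat.strong_induction_on with
  | _ j ih =>
    rcases j with _ | j
    · simp only [pow_zero, gaussPairing_one]
    · have h4π : (4 * π : ℂ) ≠ 0 := by simp [Real.pi_ne_zero]
      have h0 := gaussPairing_X_sub_C_pow_succ 0 j
      rw [map_zero, sub_zero] at h0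
      rw [← mul_right_inj' h4π, gaussPairing_X_sub_C_pow_succ, h0, ih (j - 1) (by omega)]

lemma gaussPairing_eq_gaussPairing_taylor (c : ℂ) (S : ℂ[X]) :
    gaussPairing c S = gaussPairing 0 (taylor c S) := by
  conv_lhs => rw [← sum_taylor_eq S c]
  conv_rhs => rw [← sum_C_mul_X_pow_eq (taylor c S)]
  simp only [Polynomial.sum, map_sum, gaussPairing_C_mul, gaussPairing_X_sub_C_pow]

-- Rodrigues: `(-d/dt)ⁿ e^{-2πt²} = (gaussHermite n).eval t * e^{-2πt²}`.
def gaussHermite : ℕ → ℂ[X]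
  | 0 => 1
  | n + 1 => C (4 * π : ℂ) * X * gaussHermite n - derivative (gaussHermite n)

lemma natDegree_gaussHermite_le (n : ℕ) : (gaussHermite n).natDegree ≤ n := by
  induction n with
  | zero => simp [gaussHermite]
  | succ n ih =>
    rw [gaussHermite]
    have hmul : (C (4 * π : ℂ) * X * gaussHermite n).natDegree ≤ n + 1 := by
      rw [mul_assoc]
      exact (natDegree_C_mul_le _ _).trans ((natDegree_mul_le_of_le natDegree_X_le ih).trans_eq
        (add_comm 1 n))
    have hder : (derivative (gaussHermite n)).natDegree ≤ n + 1 :=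
      (natDegree_derivative_le _).trans (by omega)
    exact (natDegree_sub_le_of_le hmul hder).trans_eq (max_self _)

lemma coeff_gaussHermite_self (n : ℕ) : (gaussHermite n).coeff n = (4 * π) ^ n := by
  induction n with
  | zero => simp [gaussHermite]
  | succ n ih =>
    have htop : (gaussHermite n).coeff (n + 2) = 0 :=
      coeff_eq_zero_of_natDegree_lt ((natDegree_gaussHermite_le n).trans_lt (by omega))
    rw [gaussHermite, coeff_sub, mul_assoc, coeff_C_mul, coeff_X_mul, ih, coeff_derivative, htop,
      pow_succ]
    ring

lemma gaussPairing_derivative_mul (U S : ℂ[X]) :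
    gaussPairing 0 (derivative U * S)
      = gaussPairing 0 (U * (C (4 * π : ℂ) * X * S - derivative S)) := by
  have h := gaussPairing_derivative 0 (U * S)
  rw [derivative_mul, map_add, C_0, sub_zero] at h
  rw [mul_sub, map_sub, show U * (C (4 * π : ℂ) * X * S) = C (4 * π : ℂ) * (X * (U * S)) by ring,
    gaussPairing_C_mul]
  linear_combination h

lemma factorial_mul_gaussPairing_hasseDeriv (U : ℂ[X]) (i : ℕ) :
    (i.factorial : ℂ) * gaussPairing 0 (hasseDeriv i U)
      = gaussPairing 0 (U * gaussHermite i) := by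
  rw [← nsmul_eq_mul, ← map_nsmul, ← LinearMap.smul_apply, factorial_smul_hasseDeriv]
  induction i generalizing U with
  | zero => simp [gaussHermite]
  | succ i ih => rw [Function.iterate_succ_apply, ih, gaussPairing_derivative_mul, gaussHermite]

section Orthogonal

variable {Q : ℂ[X]} {k : ℕ} (hQ : ∀ j < k, gaussPairing 0 (Q * X ^ j) = 0)
include hQ

lemma gaussPairing_mul_of_natDegree_le {R : ℂ[X]} (hR : R.natDegree ≤ k) :
    gaussPairing 0 (Q * R) = R.coeff k * gaussPairing 0 (Q * X ^ k) := by
  conv_lhs => rw [R.as_sum_range_C_mul_X_pow' (Nat.lt_succ_of_le hR)]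
  rw [Finset.mul_sum, map_sum, Finset.sum_range_succ, Finset.sum_eq_zero, zero_add]
  · rw [mul_left_comm, gaussPairing_C_mul]
  · intro j hj
    rw [mul_left_comm, gaussPairing_C_mul, hQ j (Finset.mem_range.1 hj), mul_zero]

lemma gaussPairing_hasseDeriv_of_lt {i : ℕ} (hi : i < k) :
    gaussPairing 0 (hasseDeriv i Q) = 0 := by
  have h := factorial_mul_gaussPairing_hasseDeriv Q i
  rw [gaussPairing_mul_of_natDegree_le hQ ((natDegree_gaussHermite_le i).trans hi.le),
    coeff_eq_zero_of_natDegree_lt ((natDegree_gaussHermite_le i).trans_lt hi), zero_mul] at h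
  exact (mul_eq_zero.1 h).resolve_left (Nat.cast_ne_zero.2 i.factorial_ne_zero)

variable (hQk : Q.natDegree = k)
include hQk

lemma gaussPairing_eq_leadingCoeff_mul_pow (c : ℂ) :
    gaussPairing c Q = Q.leadingCoeff * gaussPairing 0 1 * c ^ k := by
  rw [gaussPairing_eq_gaussPairing_taylor, taylor_eq_sum_hasseDeriv c Q (n := k + 1) (by omega),
    map_sum, Finset.sum_range_succ, Finset.sum_eq_zero, zero_add, map_smul, ← hQk,
    hasseDeriv_natDegree_eq_C, ← mul_one (C _), gaussPairing_C_mul, smul_eq_mul]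
  · ring
  · intro i hi
    rw [map_smul, gaussPairing_hasseDeriv_of_lt hQ (Finset.mem_range.1 hi), smul_zero]

lemma leadingCoeff_sq_mul_factorial (hQQ : gaussPairing 0 (Q * Q) = 1) :
    Q.leadingCoeff ^ 2 * k.factorial = (4 * π) ^ k * √2 := by
  subst hQk
  have hnorm := gaussPairing_mul_of_natDegree_le hQ le_rfl
  have hherm := factorial_mul_gaussPairing_hasseDeriv Q Q.natDegree
  rw [hQQ, coeff_natDegree] at hnorm
  rw [gaussPairing_mul_of_natDegree_le hQ (natDegree_gaussHermite_le _), coeff_gaussHermite_self,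
    hasseDeriv_natDegree_eq_C, ← mul_one (C _), gaussPairing_C_mul, gaussPairing_one] at hherm
  have hsqrt : (√2 : ℂ) * ((√2)⁻¹ : ℝ) = 1 := by
    rw [ofReal_inv, mul_inv_cancel₀ (ofReal_ne_zero.2 (by positivity))]
  linear_combination √2 * Q.leadingCoeff * hherm - (4 * π) ^ Q.natDegree * √2 * hnorm
    - Q.leadingCoeff ^ 2 * Q.natDegree.factorial * hsqrt

end Orthogonal

lemma eval_map_algebraMap_ofReal (R : ℝ[X]) (t : ℝ) :
    (R.map (algebraMap ℝ ℂ)).eval (t : ℂ) = R.eval t := by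
  rw [eval_map_algebraMap]
  exact aeval_algebraMap_apply_eq_algebraMap_eval t R

lemma gaussPairing_zero_map_ofReal (R : ℝ[X]) :
    gaussPairing 0 (R.map (algebraMap ℝ ℂ))
      = ((∫ t : ℝ, R.eval t * Real.exp (-2 * π * t ^ 2) : ℝ) : ℂ) := by
  rw [gaussPairing_apply, ← integral_complex_ofReal]
  congr 1 with t
  rw [eval_map_algebraMap_ofReal, gaussKernel]
  push_cast
  ring_nf

open ComplexConjugate in
lemma spec_eq_norm_gaussPairing_sq (P : ℝ[X]) (z : ℂ) :
    Spec (fun t => ((P.eval t * Real.exp (-π * t ^ 2) : ℝ) : ℂ)) z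
      = Real.exp (-π * ‖z‖ ^ 2) * √2
        * ‖gaussPairing (conj z / 2) (P.map (algebraMap ℝ ℂ))‖ ^ 2 := by
  set c := conj z / 2 with hc
  set w : ℂ := 2 * π * c ^ 2 - π * z.re ^ 2
  have hpt : ∀ t : ℝ, ((P.eval t * Real.exp (-π * t ^ 2) : ℝ) : ℂ)
        * (((2 : ℝ) ^ ((1 : ℝ) / 4) : ℝ) : ℂ) * cexp (-(π : ℂ) * ((t : ℂ) - (z.re : ℂ)) ^ 2)
        * cexp (-2 * (π : ℂ) * I * (z.im : ℂ) * (t : ℂ))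
      = (((2 : ℝ) ^ ((1 : ℝ) / 4) : ℝ) * cexp w)
        * ((P.map (algebraMap ℝ ℂ)).eval (t : ℂ) * gaussKernel c t) := fun t => by
    rw [eval_map_algebraMap_ofReal, gaussKernel, ofReal_mul, ofReal_exp]
    have hexp : cexp ((-π * t ^ 2 : ℝ) : ℂ) * cexp (-(π : ℂ) * ((t : ℂ) - (z.re : ℂ)) ^ 2)
          * cexp (-2 * (π : ℂ) * I * (z.im : ℂ) * (t : ℂ))
        = cexp w * cexp (-2 * π * ((t : ℂ) - c) ^ 2) := by
      have hc' : c = (z.re - z.im * I) / 2 := by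
        rw [hc]; apply Complex.ext <;> simp
      simp only [← Complex.exp_add, w, hc']
      push_cast
      ring_nf
    linear_combination (((P.eval t : ℝ) : ℂ) * (((2 : ℝ) ^ ((1 : ℝ) / 4) : ℝ) : ℂ)) * hexp
  have hroot : ((2 : ℝ) ^ ((1 : ℝ) / 4)) ^ 2 = √2 := by
    rw [Real.sqrt_eq_rpow, ← Real.rpow_natCast, ← Real.rpow_mul zero_le_two]
    norm_num
  have hw : Real.exp w.re ^ 2 = Real.exp (-π * ‖z‖ ^ 2) := by
    rw [← Real.exp_nat_mul, Complex.sq_norm, normSq_apply]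
    congr 1
    simp [w, hc, pow_two]
    ring
  simp only [Spec, hpt]
  rw [integral_const_mul, ← gaussPairing_apply, norm_mul, norm_mul, mul_pow, mul_pow, norm_real,
    Complex.norm_exp, Real.norm_of_nonneg (by positivity), hroot, hw]
  ring

end

theorem spec_hermite_general (k : ℕ) (P : Polynomial ℝ)
    (hdeg : P.natDegree = k)
    (horth : ∀ j : ℕ, j < k → ∫ t : ℝ, P.eval t * t ^ j * Real.exp (-2 * π * t ^ 2) = 0)
    (h : ℝ → ℂ)
    (hh : ∀ t : ℝ, h t = ((P.eval t * Real.exp (-π * t ^ 2) : ℝ) : ℂ))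
    (hnorm : ∫ t : ℝ, ‖h t‖ ^ 2 = 1)
    (z : ℂ) :
    Spec h z = Real.exp (-π * ‖z‖ ^ 2) * π ^ k * ‖z‖ ^ (2 * k)
      / (Nat.factorial k) := by
  obtain rfl : h = _ := funext hh
  set Q := P.map (algebraMap ℝ ℂ)
  have hQk : Q.natDegree = k := (natDegree_map _).trans hdeg
  have hQ : ∀ j < k, gaussPairing 0 (Q * X ^ j) = 0 := fun j hj => by
    rw [← Polynomial.map_X (algebraMap ℝ ℂ), ← Polynomial.map_pow, ← Polynomial.map_mul,
      gaussPairing_zero_map_ofReal]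
    simp only [eval_mul, eval_pow, eval_X, horth j hj, ofReal_zero]
  have hQQ : gaussPairing 0 (Q * Q) = 1 := by
    rw [← Polynomial.map_mul, gaussPairing_zero_map_ofReal, ← ofReal_one, ← hnorm]
    congr 2 with t
    rw [eval_mul, norm_real, Real.norm_eq_abs, sq_abs, mul_pow, ← Real.exp_nat_mul]
    ring_nf
  have hlc := congrArg norm (leadingCoeff_sq_mul_factorial hQ hQk hQQ)
  simp only [norm_mul, norm_pow, Complex.norm_natCast, norm_real, Complex.norm_ofNat,
    Real.norm_of_nonneg (Real.sqrt_nonneg 2), Real.norm_of_nonneg Real.pi_pos.le] at hlc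
  rw [spec_eq_norm_gaussPairing_sq, gaussPairing_eq_leadingCoeff_mul_pow hQ hQk, gaussPairing_one]
  simp only [norm_mul, norm_pow, norm_real, norm_inv, norm_div, Complex.norm_conj,
    Complex.norm_ofNat, Real.norm_of_nonneg (Real.sqrt_nonneg 2)]
  field_simp
  have h4 : (4 : ℝ) ^ k = (2 ^ k) ^ 2 := by rw [← pow_mul, mul_comm, pow_mul]; norm_num
  rw [mul_right_comm, hlc, mul_pow, h4, div_pow, mul_comm 2 k, pow_mul]
  field_simp

/-- The spectrogram of the `k`-th Hermite function `h_k` is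
`e^{−π|z|²} π^k |z|^{2k} / k!`. Here `h_k = P·e^{-πt²}` is `L²`-normalized, where `P` is
the degree-`k` orthogonal polynomial for the weight `e^{−2πt²}` with positive leading
coefficient. -/
theorem spec_hermite (k : ℕ) (P : Polynomial ℝ)
    (hdeg : P.natDegree = k) (hlead : 0 < P.leadingCoeff)
    (horth : ∀ j : ℕ, j < k → ∫ t : ℝ, P.eval t * t ^ j * Real.exp (-2 * π * t ^ 2) = 0)
    (h : ℝ → ℂ)
    (hh : ∀ t : ℝ, h t = ((P.eval t * Real.exp (-π * t ^ 2) : ℝ) : ℂ))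
    (hnorm : ∫ t : ℝ, ‖h t‖ ^ 2 = 1)
    (z : ℂ) :
    Spec h z = Real.exp (-π * ‖z‖ ^ 2) * π ^ k * ‖z‖ ^ (2 * k)
      / (Nat.factorial k) :=
  spec_hermite_general k P hdeg horth h hh hnorm z
end

section
/- Fix k ∈ ℕ with k ≥ 1 and γ > 0, and define ρ: ℂ → ℝ by ρ(z) = (1 + γ r^{k−1}(k−r)² e^{−r}/k!) · exp(−γ r^k e^{−r}/k!) with r = π|z|². Then for every R > 0, ∫_{B(0,R)} ρ(z) dz = k − (k − πR²) · exp(−γ π^k R^{2k} e^{−πR²} / k!), where B(0,R) ⊂ ℂ ≅ ℝ² is the open disc of radius R centered at 0 and dz is the Lebesgue measure on ℝ². -/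
open Real MeasureTheory

/-!
Both `ρ` and the claimed count are functions of `r = π|z|²` alone. Polar coordinates give
`∫_{B(0,R)} f(π|z|²) dz = ∫_0^R 2πs f(πs²) ds`, and the substitution `u = πs²` turns this into
`∫_0^{πR²} f(u) du`. With `N(u) = k − (k − u) exp(−γ uᵏ e⁻ᵘ / k!)` one checks `N' = ρ` as a
function of `u` (this uses `k uᵏ⁻¹ − uᵏ = uᵏ⁻¹ (k − u)`, valid for `k ≥ 1`) and `N(0) = 0`.
-/

open Set
open scoped Nat

section RadialIntegral

variable {E : Type*} [NormedAddCommGroup E] [NormedSpace ℝ E]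

theorem integral_ball_complex_fun_norm (f : ℝ → E) {R : ℝ} (hR : 0 ≤ R) :
    ∫ z in Metric.ball (0 : ℂ) R, f ‖z‖ = ∫ r in 0..R, (2 * π * r) • f r := by
  have hball : ∫ z in Metric.ball (0 : ℂ) R, f ‖z‖ = ∫ z : ℂ, (Iio R).indicator f ‖z‖ := by
    rw [← integral_indicator measurableSet_ball]
    congr 1 with z
    simp only [indicator, mem_ball_zero_iff, mem_Iio]
  have hradial : ∫ r in Ioi (0 : ℝ), r ^ (2 - 1) • (Iio R).indicator f r =
      ∫ r in 0..R, r • f r := by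
    rw [intervalIntegral.integral_of_le hR, integral_Ioc_eq_integral_Ioo, ← Ioi_inter_Iio,
      ← setIntegral_indicator measurableSet_Iio]
    congr 1 with r
    by_cases hr : r ∈ Iio R <;> simp [hr]
  have hvol : volume.real (Metric.ball (0 : ℂ) 1) = π := by
    simp [Measure.real, Complex.volume_ball]
  have hpolar := integral_fun_norm_addHaar (volume : Measure ℂ) ((Iio R).indicator f)
  rw [Complex.finrank_real_complex, hvol, hradial] at hpolar
  rw [hball, hpolar, ← Nat.cast_smul_eq_nsmul ℝ, smul_smul, ← intervalIntegral.integral_smul]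
  congr 1 with r
  rw [smul_smul]
  push_cast
  ring_nf

theorem integral_ball_complex_comp_pi_mul_norm_sq (f : ℝ → E) {R : ℝ} (hR : 0 ≤ R) :
    ∫ z in Metric.ball (0 : ℂ) R, f (π * ‖z‖ ^ 2) = ∫ u in 0..π * R ^ 2, f u := by
  rw [integral_ball_complex_fun_norm (fun r => f (π * r ^ 2)) hR]
  have hsubst := intervalIntegral.integral_deriv_smul_comp_of_deriv_nonneg (g := f)
    (f := fun r => π * r ^ 2) (f' := fun r => 2 * π * r) (a := 0) (b := R) (by fun_prop) ?_ ?_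
  · simpa using hsubst
  · intro r _
    simpa [mul_comm, mul_left_comm] using (hasDerivAt_pow 2 r).const_mul π
  · intro r hr
    rw [min_eq_left hR, max_eq_right hR] at hr
    exact mul_nonneg (by positivity) hr.1.le

end RadialIntegral

section HermiteZeros

variable (k : ℕ) (γ : ℝ)

noncomputable def hermiteZeroIntensity (r : ℝ) : ℝ :=
  (1 + γ * r ^ (k - 1) * ((k : ℝ) - r) ^ 2 * exp (-r) / k !)
    * exp (-(γ * r ^ k * exp (-r) / k !))

noncomputable def hermiteZeroCount (r : ℝ) : ℝ :=
  k - (k - r) * exp (-(γ * r ^ k * exp (-r) / k !))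

variable {k}

theorem hasDerivAt_hermiteZeroCount (hk : k ≠ 0) (r : ℝ) :
    HasDerivAt (hermiteZeroCount k γ) (hermiteZeroIntensity k γ r) r := by
  have hexponent :=
    ((((hasDerivAt_pow k r).const_mul γ).mul (hasDerivAt_neg r).exp).div_const (k ! : ℝ)).neg.exp
  have hcount := (hasDerivAt_const r (k : ℝ)).sub
    (((hasDerivAt_const r (k : ℝ)).sub (hasDerivAt_id r)).mul hexponent)
  unfold hermiteZeroCount
  refine hcount.congr_deriv ?_
  simp only [hermiteZeroIntensity, Pi.sub_apply, Pi.mul_apply, Pi.neg_apply, id,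
    ← pow_sub_one_mul hk r]
  ring

theorem hermiteZeroCount_zero (hk : k ≠ 0) : hermiteZeroCount k γ 0 = 0 := by
  simp [hermiteZeroCount, zero_pow hk]

theorem continuous_hermiteZeroIntensity : Continuous (hermiteZeroIntensity k γ) := by
  unfold hermiteZeroIntensity
  fun_prop

theorem integral_hermiteZeroIntensity (hk : k ≠ 0) (a : ℝ) :
    ∫ r in 0..a, hermiteZeroIntensity k γ r = hermiteZeroCount k γ a := by
  rw [intervalIntegral.integral_eq_sub_of_hasDerivAt
      (fun r _ => hasDerivAt_hermiteZeroCount γ hk r)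
      ((continuous_hermiteZeroIntensity γ).intervalIntegrable 0 a),
    hermiteZeroCount_zero γ hk, sub_zero]

end HermiteZeros

theorem expected_zeros_ball_hermite_general (k : ℕ) (hk : 1 ≤ k) (γ : ℝ)
    (ρ : ℂ → ℝ)
    (hρ : ∀ z : ℂ, ρ z =
      (1 + γ * (π * ‖z‖ ^ 2) ^ (k - 1)
          * ((k : ℝ) - π * ‖z‖ ^ 2) ^ 2
          * Real.exp (-(π * ‖z‖ ^ 2)) / (Nat.factorial k))
        * Real.exp (-(γ * (π * ‖z‖ ^ 2) ^ k
          * Real.exp (-(π * ‖z‖ ^ 2)) / (Nat.factorial k))))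
    (R : ℝ) (hR : 0 < R) :
    ∫ z in Metric.ball (0 : ℂ) R, ρ z =
      (k : ℝ) - ((k : ℝ) - π * R ^ 2)
        * Real.exp (-(γ * π ^ k * R ^ (2 * k) * Real.exp (-π * R ^ 2)
          / (Nat.factorial k))) := by
  have hρ_radial : ρ = fun z => hermiteZeroIntensity k γ (π * ‖z‖ ^ 2) := funext hρ
  rw [hρ_radial, integral_ball_complex_comp_pi_mul_norm_sq _ hR.le,
    integral_hermiteZeroIntensity γ (Nat.one_le_iff_ne_zero.mp hk), hermiteZeroCount,
    mul_pow, ← pow_mul, neg_mul, ← mul_assoc]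

/-- The expected number of zeros of the spectrogram of a noisy Hermite function falling
in the disc `B(0,R)`: integrating the intensity
`ρ(z) = (1 + γ r^{k−1}(k−r)² e^{−r}/k!) exp(−γ r^k e^{−r}/k!)`, `r = π|z|²`, over `B(0,R)`
gives `k − (k − πR²) exp(−γ π^k R^{2k} e^{−πR²}/k!)`. -/
theorem expected_zeros_ball_hermite (k : ℕ) (hk : 1 ≤ k) (γ : ℝ) (hγ : 0 < γ)
    (ρ : ℂ → ℝ)
    (hρ : ∀ z : ℂ, ρ z =
      (1 + γ * (π * ‖z‖ ^ 2) ^ (k - 1)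
          * ((k : ℝ) - π * ‖z‖ ^ 2) ^ 2
          * Real.exp (-(π * ‖z‖ ^ 2)) / (Nat.factorial k))
        * Real.exp (-(γ * (π * ‖z‖ ^ 2) ^ k
          * Real.exp (-(π * ‖z‖ ^ 2)) / (Nat.factorial k))))
    (R : ℝ) (hR : 0 < R) :
    ∫ z in Metric.ball (0 : ℂ) R, ρ z =
      (k : ℝ) - ((k : ℝ) - π * R ^ 2)
        * Real.exp (-(γ * π ^ k * R ^ (2 * k) * Real.exp (-π * R ^ 2)
          / (Nat.factorial k))) :=
  expected_zeros_ball_hermite_general k hk γ ρ hρ R hR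
end

section
/- Let a₁, a₂, b ∈ ℝ, γ₁, γ₂ > 0, σ_b = √(2/(1+4b²)). Define S: ℂ → ℝ by S(z) = σ_b (γ₁ e^{−2πr²} + γ₂ e^{−2π(r−a)²} + 2√(γ₁γ₂) e^{−πr²−π(r−a)²} cos(2πas)), where a = (σ_b/√2)(a₂−a₁), r = (σ_b/√2)(ω − 2bτ − a₁), s = (σ_b/√2)(τ + 2bω − (a₁+a₂)b) for z = τ+iω. Then for every z ∈ ℂ, (1 + S(z) + ΔS(z)/(4π)) · e^{−S(z)} = e^{−S(z)} · (1 + 4πσ_b(γ₁ r² e^{−2πr²} + γ₂ (r−a)² e^{−2π(r−a)²} + 2√(γ₁γ₂) r(r−a) e^{−πr²−π(r−a)²} cos(2πas))). -/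
open Real

/-- Partial derivative in the time (real-part) direction of a function on the
time-frequency plane `ℂ ≅ ℝ²`. -/
noncomputable def pderivRe (f : ℂ → ℝ) (z : ℂ) : ℝ :=
  deriv (fun t : ℝ => f (z + (t : ℂ))) 0

/-- Partial derivative in the frequency (imaginary-part) direction. -/
noncomputable def pderivIm (f : ℂ → ℝ) (z : ℂ) : ℝ :=
  deriv (fun t : ℝ => f (z + (t : ℂ) * Complex.I)) 0

/-- The Laplacian `Δ = ∂²/∂τ² + ∂²/∂ω²` of a function of `z = τ + iω`. -/
noncomputable def laplacian (f : ℂ → ℝ) (z : ℂ) : ℝ :=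
  pderivRe (pderivRe f) z + pderivIm (pderivIm f) z

/-!
In the rotated coordinates `(x, y) = (r, s)`, `S / σ` is the real part of a combination of the
three complex chirp atoms `exp (-π (x - p)² - π (x - q)² + 2πi (q - p) y)` with
`(p, q) = (0, 0), (a, a), (0, a)`. Restricted to a line, an atom is the exponential of a quadratic
polynomial `α t² + β t + γ`, whose second derivative at `0` is `(2α + β²) e^γ`. Adding the
two coordinate directions, which are orthonormal in `(x, y)`, the mixed terms cancel and
`Δ atom = (16π² (x - p)(x - q) - 4π) atom`; hence `ΔS / 4π = 4πσ (⋯) - S`.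
-/

open Complex

theorem deriv_comp_add_mul_ofReal (f : ℂ → ℝ) (z w : ℂ) (t : ℝ) :
    deriv (fun t' : ℝ => f (z + t * w + t' * w)) 0 = deriv (fun t : ℝ => f (z + t * w)) t := by
  rw [← zero_add t, ← deriv_comp_add_const, zero_add]
  congr 1
  funext t'
  push_cast
  ring_nf

theorem laplacian_eq_deriv_deriv (f : ℂ → ℝ) (z : ℂ) :
    laplacian f z = deriv (deriv fun t : ℝ => f (z + t)) 0
      + deriv (deriv fun t : ℝ => f (z + t * I)) 0 := by
  have hRe := fun t => deriv_comp_add_mul_ofReal f z 1 t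
  simp only [mul_one] at hRe
  simp only [laplacian, pderivRe, pderivIm, hRe, deriv_comp_add_mul_ofReal]

theorem hasDerivAt_cexp_quadratic (α β γ : ℂ) (t : ℝ) :
    HasDerivAt (fun t : ℝ => cexp (α * t ^ 2 + β * t + γ))
      ((2 * α * t + β) * cexp (α * t ^ 2 + β * t + γ)) t := by
  have hq : HasDerivAt (fun w : ℂ => α * w ^ 2 + β * w + γ) (2 * α * t + β) t :=
    ((((hasDerivAt_pow 2 (t : ℂ)).const_mul α).fun_add
      ((hasDerivAt_id' (t : ℂ)).const_mul β)).add_const γ).congr_deriv (by push_cast; ring)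
  exact hq.cexp.comp_ofReal.congr_deriv (mul_comm _ _)

theorem hasDerivAt_linear_mul_cexp_quadratic (α β γ : ℂ) (t : ℝ) :
    HasDerivAt (fun t : ℝ => (2 * α * t + β) * cexp (α * t ^ 2 + β * t + γ))
      ((2 * α + (2 * α * t + β) ^ 2) * cexp (α * t ^ 2 + β * t + γ)) t := by
  have hl : HasDerivAt (fun t : ℝ => 2 * α * t + β) (2 * α) t := by
    simpa using (((hasDerivAt_id' (t : ℂ)).const_mul (2 * α)).add_const β).comp_ofReal
  exact (hl.fun_mul (hasDerivAt_cexp_quadratic α β γ t)).congr_deriv (by ring)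

theorem deriv_deriv_re_sum_cexp_quadratic {ι : Type*} (s : Finset ι) (c α β γ : ι → ℂ) :
    deriv (deriv fun t : ℝ => (∑ k ∈ s, c k * cexp (α k * t ^ 2 + β k * t + γ k)).re) 0 =
      (∑ k ∈ s, c k * (2 * α k + β k ^ 2) * cexp (γ k)).re := by
  have h1 (t : ℝ) : HasDerivAt
      (fun t : ℝ => (∑ k ∈ s, c k * cexp (α k * t ^ 2 + β k * t + γ k)).re)
      (∑ k ∈ s, c k * ((2 * α k * t + β k) * cexp (α k * t ^ 2 + β k * t + γ k))).re t :=
    reCLM.hasFDerivAt.comp_hasDerivAt t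
      (HasDerivAt.fun_sum fun k _ => (hasDerivAt_cexp_quadratic _ _ _ t).const_mul (c k))
  have h2 : HasDerivAt
      (fun t : ℝ =>
        (∑ k ∈ s, c k * ((2 * α k * t + β k) * cexp (α k * t ^ 2 + β k * t + γ k))).re)
      (∑ k ∈ s, c k * ((2 * α k + (2 * α k * (0 : ℝ) + β k) ^ 2)
        * cexp (α k * (0 : ℝ) ^ 2 + β k * (0 : ℝ) + γ k))).re 0 :=
    reCLM.hasFDerivAt.comp_hasDerivAt 0
      (HasDerivAt.fun_sum fun k _ => (hasDerivAt_linear_mul_cexp_quadratic _ _ _ 0).const_mul (c k))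
  rw [funext fun t => (h1 t).deriv, h2.deriv]
  simp [mul_assoc]

noncomputable def chirpExponent (p q x y : ℝ) : ℂ :=
  ((-π * (x - p) ^ 2 - π * (x - q) ^ 2 : ℝ) : ℂ) + ((2 * π * (q - p) * y : ℝ) : ℂ) * I

theorem re_ofReal_mul_cexp_chirpExponent (c p q x y : ℝ) :
    (c * cexp (chirpExponent p q x y)).re
      = c * Real.exp (-π * (x - p) ^ 2 - π * (x - q) ^ 2) * Real.cos (2 * π * (q - p) * y) := by
  rw [re_ofReal_mul, exp_re, chirpExponent, ← mul_assoc]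
  simp only [add_re, add_im, ofReal_re, ofReal_im, mul_I_re, mul_I_im, neg_zero, add_zero, zero_add]

theorem chirpExponent_add_mul (p q x y u v t : ℝ) :
    chirpExponent p q (x + u * t) (y + v * t) =
      ((-2 * π * u ^ 2 : ℝ) : ℂ) * t ^ 2
        + (((-2 * π * u * (2 * x - p - q) : ℝ) : ℂ)
          + ((2 * π * (q - p) * v : ℝ) : ℂ) * I) * t
        + chirpExponent p q x y := by
  simp only [chirpExponent]
  push_cast
  ring

theorem apply_add_ofReal_mul_of_affine {R : ℂ → ℝ} {r₀ u₁ u₂ : ℝ}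
    (hR : ∀ z, R z = r₀ + u₁ * z.re + u₂ * z.im) (z w : ℂ) (t : ℝ) :
    R (z + t * w) = R z + (u₁ * w.re + u₂ * w.im) * t := by
  rw [hR, hR z, add_re, add_im, re_ofReal_mul, im_ofReal_mul]
  ring

section ChirpSum

variable {ι : Type*} (s : Finset ι) (c : ι → ℂ) (p q : ι → ℝ)

theorem deriv_deriv_re_sum_cexp_chirpExponent_add_mul (x y u v : ℝ) :
    deriv (deriv fun t : ℝ =>
        (∑ k ∈ s, c k * cexp (chirpExponent (p k) (q k) (x + u * t) (y + v * t))).re) 0 =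
      (∑ k ∈ s, c k * (2 * ((-2 * π * u ^ 2 : ℝ) : ℂ)
        + (((-2 * π * u * (2 * x - p k - q k) : ℝ) : ℂ)
          + ((2 * π * (q k - p k) * v : ℝ) : ℂ) * I) ^ 2)
        * cexp (chirpExponent (p k) (q k) x y)).re := by
  simp only [chirpExponent_add_mul]
  exact deriv_deriv_re_sum_cexp_quadratic s c _ _ _

theorem laplacian_re_sum_cexp_chirpExponent
    (R T : ℂ → ℝ) (r₀ s₀ u₁ u₂ v₁ v₂ : ℝ)
    (hR : ∀ z, R z = r₀ + u₁ * z.re + u₂ * z.im)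
    (hT : ∀ z, T z = s₀ + v₁ * z.re + v₂ * z.im)
    (hu : u₁ ^ 2 + u₂ ^ 2 = 1) (hv : v₁ ^ 2 + v₂ ^ 2 = 1)
    (huv : u₁ * v₁ + u₂ * v₂ = 0) (z : ℂ) :
    laplacian (fun z => (∑ k ∈ s, c k * cexp (chirpExponent (p k) (q k) (R z) (T z))).re) z =
      (∑ k ∈ s, c k * ((16 * π ^ 2 * (R z - p k) * (R z - q k) - 4 * π : ℝ) : ℂ)
        * cexp (chirpExponent (p k) (q k) (R z) (T z))).re := by
  have hline (w : ℂ) :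
      deriv (deriv fun t : ℝ =>
          (∑ k ∈ s, c k
            * cexp (chirpExponent (p k) (q k) (R (z + t * w)) (T (z + t * w)))).re) 0 =
        (∑ k ∈ s, c k * (2 * ((-2 * π * (u₁ * w.re + u₂ * w.im) ^ 2 : ℝ) : ℂ)
          + (((-2 * π * (u₁ * w.re + u₂ * w.im) * (2 * R z - p k - q k) : ℝ) : ℂ)
            + ((2 * π * (q k - p k) * (v₁ * w.re + v₂ * w.im) : ℝ) : ℂ) * I) ^ 2)
          * cexp (chirpExponent (p k) (q k) (R z) (T z))).re := by
    simp only [apply_add_ofReal_mul_of_affine hR, apply_add_ofReal_mul_of_affine hT]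
    exact deriv_deriv_re_sum_cexp_chirpExponent_add_mul s c p q _ _ _ _
  have h₁ := hline 1
  have h₂ := hline I
  simp only [one_re, one_im, I_re, I_im, mul_one, mul_zero, add_zero, zero_add] at h₁ h₂
  rw [laplacian_eq_deriv_deriv, h₁, h₂, ← add_re, ← Finset.sum_add_distrib]
  congr 2
  funext k
  have hu' : (u₁ : ℂ) ^ 2 + u₂ ^ 2 = 1 := by exact_mod_cast hu
  have hv' : (v₁ : ℂ) ^ 2 + v₂ ^ 2 = 1 := by exact_mod_cast hv
  have huv' : (u₁ : ℂ) * v₁ + u₂ * v₂ = 0 := by exact_mod_cast huv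
  push_cast
  linear_combination (c k * cexp (chirpExponent (p k) (q k) (R z) (T z))) *
    ((-4 * π + 4 * π ^ 2 * (2 * R z - p k - q k) ^ 2) * hu' - 4 * π ^ 2 * (q k - p k) ^ 2 * hv'
      - 8 * π ^ 2 * I * (2 * R z - p k - q k) * (q k - p k) * huv'
      + 4 * π ^ 2 * (q k - p k) ^ 2 * (v₁ ^ 2 + v₂ ^ 2) * I_sq)

end ChirpSum

theorem intensity_pair_of_chirps_general (a₁ a₂ b γ₁ γ₂ : ℝ)
    (σ a : ℝ) (hσ : σ = Real.sqrt (2 / (1 + 4 * b ^ 2)))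
    (r s : ℂ → ℝ)
    (hr : ∀ z : ℂ, r z = σ / Real.sqrt 2 * (z.im - 2 * b * z.re - a₁))
    (hs : ∀ z : ℂ, s z = σ / Real.sqrt 2 * (z.re + 2 * b * z.im - (a₁ + a₂) * b))
    (S : ℂ → ℝ)
    (hS : ∀ z : ℂ, S z = σ * (γ₁ * Real.exp (-2 * π * (r z) ^ 2)
      + γ₂ * Real.exp (-2 * π * (r z - a) ^ 2)
      + 2 * Real.sqrt (γ₁ * γ₂) * Real.exp (-π * (r z) ^ 2 - π * (r z - a) ^ 2)
        * Real.cos (2 * π * a * s z)))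
    (z : ℂ) :
    (1 + S z + laplacian S z / (4 * π)) * Real.exp (-S z) =
      Real.exp (-S z) * (1 + 4 * π * σ * (γ₁ * (r z) ^ 2 * Real.exp (-2 * π * (r z) ^ 2)
        + γ₂ * (r z - a) ^ 2 * Real.exp (-2 * π * (r z - a) ^ 2)
        + 2 * Real.sqrt (γ₁ * γ₂) * (r z) * (r z - a)
          * Real.exp (-π * (r z) ^ 2 - π * (r z - a) ^ 2) * Real.cos (2 * π * a * s z))) := by
  set c := σ / Real.sqrt 2
  have hc : c ^ 2 * (1 + 4 * b ^ 2) = 1 := by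
    rw [div_pow, Real.sq_sqrt zero_le_two, hσ, Real.sq_sqrt (by positivity)]
    field_simp
  let C : Fin 3 → ℝ := ![σ * γ₁, σ * γ₂, 2 * σ * Real.sqrt (γ₁ * γ₂)]
  let P : Fin 3 → ℝ := ![0, a, 0]
  let Q : Fin 3 → ℝ := ![0, a, a]
  have hS_sum :
      S = fun w => (∑ k, (C k : ℂ) * cexp (chirpExponent (P k) (Q k) (r w) (s w))).re := by
    funext w
    simp only [hS, Fin.sum_univ_three, add_re, re_ofReal_mul_cexp_chirpExponent, C, P, Q,
      Matrix.cons_val_zero, Matrix.cons_val_one, Matrix.cons_val_two, Matrix.tail_cons,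
      Matrix.head_cons, sub_zero, sub_self, mul_zero, zero_mul, Real.cos_zero, mul_one]
    ring_nf
  have hΔ := laplacian_re_sum_cexp_chirpExponent Finset.univ (fun k => (C k : ℂ)) P Q r s
    (-c * a₁) (-c * (a₁ + a₂) * b) (-2 * b * c) c c (2 * b * c)
    (fun w => by rw [hr]; ring) (fun w => by rw [hs]; ring)
    (by linear_combination hc) (by linear_combination hc) (by ring) z
  rw [← hS_sum] at hΔ
  simp only [← ofReal_mul, Fin.sum_univ_three, add_re, re_ofReal_mul_cexp_chirpExponent, C, P, Q,
    Matrix.cons_val_zero, Matrix.cons_val_one, Matrix.cons_val_two, Matrix.tail_cons,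
    Matrix.head_cons, sub_zero, sub_self, mul_zero, zero_mul, Real.cos_zero, mul_one] at hΔ
  rw [hΔ, hS z]
  field_simp
  ring_nf

/-- Intensity of the zeros of the spectrogram of a noisy pair of parallel chirps:
for `S` the spectrogram of the pair of chirps, expressed in rotated coordinates `(r,s)`,
`(1 + S + ΔS/4π)e^{−S} = e^{−S}(1 + 4πσ_b(γ₁r²e^{−2πr²} + γ₂(r−a)²e^{−2π(r−a)²}
+ 2√(γ₁γ₂) r(r−a) e^{−πr²−π(r−a)²} cos(2πas)))`. -/
theorem intensity_pair_of_chirps (a₁ a₂ b γ₁ γ₂ : ℝ) (hγ₁ : 0 < γ₁) (hγ₂ : 0 < γ₂)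
    (σ a : ℝ) (hσ : σ = Real.sqrt (2 / (1 + 4 * b ^ 2)))
    (ha : a = σ / Real.sqrt 2 * (a₂ - a₁))
    (r s : ℂ → ℝ)
    (hr : ∀ z : ℂ, r z = σ / Real.sqrt 2 * (z.im - 2 * b * z.re - a₁))
    (hs : ∀ z : ℂ, s z = σ / Real.sqrt 2 * (z.re + 2 * b * z.im - (a₁ + a₂) * b))
    (S : ℂ → ℝ)
    (hS : ∀ z : ℂ, S z = σ * (γ₁ * Real.exp (-2 * π * (r z) ^ 2)
      + γ₂ * Real.exp (-2 * π * (r z - a) ^ 2)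
      + 2 * Real.sqrt (γ₁ * γ₂) * Real.exp (-π * (r z) ^ 2 - π * (r z - a) ^ 2)
        * Real.cos (2 * π * a * s z)))
    (z : ℂ) :
    (1 + S z + laplacian S z / (4 * π)) * Real.exp (-S z) =
      Real.exp (-S z) * (1 + 4 * π * σ * (γ₁ * (r z) ^ 2 * Real.exp (-2 * π * (r z) ^ 2)
        + γ₂ * (r z - a) ^ 2 * Real.exp (-2 * π * (r z - a) ^ 2)
        + 2 * Real.sqrt (γ₁ * γ₂) * (r z) * (r z - a)
          * Real.exp (-π * (r z) ^ 2 - π * (r z - a) ^ 2) * Real.cos (2 * π * a * s z))) :=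
  intensity_pair_of_chirps_general a₁ a₂ b γ₁ γ₂ σ a hσ r s hr hs S hS z
end
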